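/- arXiv:2005.03452 — 7 statements merged into one kernel-verified Lean document; each statement's English description precedes it below -/
import Mathlib

section
/- For every β > 0 and every real n×m matrix W, the ℓ2 operator norm of the matrix A_β = (1+β)·(I + β·W·Wᵀ)⁻¹·W satisfies ‖A_β‖₂ ≤ (β^{1/2} + β^{-1/2})/2. Consequently, for any b ∈ ℝ^n and c ∈ ℝ^m, the affine map x ↦ A_β x + (I + β·W·Wᵀ)⁻¹(b + β·W·c) from ℝ^m to ℝ^n is Lipschitz continuous with constant (β^{1/2} + β^{-1/2})/2 with respect to the Euclidean norms. -/
/-!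
Put `y = (I + β W Wᵀ)⁻¹ W x` and `z = Wᵀ y`. Pairing `y + β W z = W x` with `y` gives
`‖y‖² + β ‖z‖² = ⟪z, x⟫ ≤ ‖z‖ ‖x‖`, and `t ‖x‖ - β t² ≤ ‖x‖² / (4β)` for every real `t`,
so `2 √β ‖y‖ ≤ ‖x‖`. The constant is `(1 + β) / (2 √β) = (√β + 1/√β) / 2`, and differences of
values of the affine map are values of `A_β`.
-/

open Matrix

theorem LinearMap.two_mul_sqrt_mul_norm_le_of_add_smul_apply_adjoint_eq
    {E F : Type*} [NormedAddCommGroup E] [InnerProductSpace ℝ E] [FiniteDimensional ℝ E]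
    [NormedAddCommGroup F] [InnerProductSpace ℝ F] [FiniteDimensional ℝ F]
    (T : E →ₗ[ℝ] F) {β : ℝ} (hβ : 0 < β) {x : E} {y : F}
    (h : y + β • T (T.adjoint y) = T x) :
    2 * √β * ‖y‖ ≤ ‖x‖ := by
  set z := T.adjoint y
  have hpair : ‖y‖ ^ 2 + β * ‖z‖ ^ 2 = inner ℝ z x := by
    rw [LinearMap.adjoint_inner_left, ← h, inner_add_right, real_inner_smul_right,
      ← LinearMap.adjoint_inner_left, real_inner_self_eq_norm_sq, real_inner_self_eq_norm_sq]
  have hle : ‖y‖ ^ 2 + β * ‖z‖ ^ 2 ≤ ‖z‖ * ‖x‖ := hpair ▸ real_inner_le_norm z x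
  have hsq : (2 * √β * ‖y‖) ^ 2 ≤ ‖x‖ ^ 2 := by
    rw [mul_pow, mul_pow, Real.sq_sqrt hβ.le]
    nlinarith [sq_nonneg (‖x‖ - 2 * β * ‖z‖)]
  exact le_of_sq_le_sq hsq (norm_nonneg x)

theorem Real.one_add_eq_sqrt_add_inv_sqrt_div_two_mul {β : ℝ} (hβ : 0 < β) :
    1 + β = (√β + 1 / √β) / 2 * (2 * √β) := by
  have hs : √β ≠ 0 := (Real.sqrt_pos.mpr hβ).ne'
  field_simp
  rw [Real.sq_sqrt hβ.le]
  ring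

namespace Matrix

theorem toEuclideanLin_mul_apply {ι κ μ : Type*} [Fintype ι] [Fintype κ] [Fintype μ]
    [DecidableEq κ] [DecidableEq μ] (A : Matrix ι κ ℝ) (B : Matrix κ μ ℝ)
    (x : EuclideanSpace ℝ μ) :
    toEuclideanLin (A * B) x = toEuclideanLin A (toEuclideanLin B x) := by
  simp [toLpLin_apply, mulVec_mulVec]

variable {ι κ : Type*} [Fintype ι] [Fintype κ] [DecidableEq ι]

theorem posDef_one_add_smul_mul_transpose {β : ℝ} (hβ : 0 < β) (W : Matrix ι κ ℝ) :
    (1 + β • (W * Wᵀ)).PosDef := by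
  have hWWt : (W * Wᵀ).PosSemidef := by
    simpa [conjTranspose_eq_transpose_of_trivial] using posSemidef_self_mul_conjTranspose W
  exact PosDef.one.add_posSemidef (hWWt.smul hβ.le)

variable [DecidableEq κ]

theorem toEuclideanLin_transpose (W : Matrix ι κ ℝ) :
    toEuclideanLin Wᵀ = (toEuclideanLin W).adjoint := by
  rw [← toEuclideanLin_conjTranspose_eq_adjoint, conjTranspose_eq_transpose_of_trivial]

theorem toEuclideanLin_one_add_smul_mul_transpose_apply (β : ℝ) (W : Matrix ι κ ℝ)
    (y : EuclideanSpace ℝ ι) :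
    toEuclideanLin (1 + β • (W * Wᵀ)) y
      = y + β • toEuclideanLin W ((toEuclideanLin W).adjoint y) := by
  rw [map_add, _root_.map_smul, LinearMap.add_apply, LinearMap.smul_apply,
    toEuclideanLin_mul_apply, toEuclideanLin_transpose]
  simp [toLpLin_apply]

theorem two_mul_sqrt_mul_norm_toEuclideanLin_inv_mul_le {β : ℝ} (hβ : 0 < β)
    (W : Matrix ι κ ℝ) (x : EuclideanSpace ℝ κ) :
    2 * √β * ‖toEuclideanLin ((1 + β • (W * Wᵀ))⁻¹ * W) x‖ ≤ ‖x‖ := by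
  have hdet : IsUnit (1 + β • (W * Wᵀ)).det :=
    (isUnit_iff_isUnit_det _).mp (posDef_one_add_smul_mul_transpose hβ W).isUnit
  refine (toEuclideanLin W).two_mul_sqrt_mul_norm_le_of_add_smul_apply_adjoint_eq hβ ?_
  rw [← toEuclideanLin_one_add_smul_mul_transpose_apply, ← toEuclideanLin_mul_apply,
    ← Matrix.mul_assoc, mul_nonsing_inv _ hdet, Matrix.one_mul]

theorem norm_toEuclideanLin_smul_inv_mul_le {β : ℝ} (hβ : 0 < β)
    (W : Matrix ι κ ℝ) (x : EuclideanSpace ℝ κ) :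
    ‖toEuclideanLin ((1 + β) • ((1 + β • (W * Wᵀ))⁻¹ * W)) x‖
      ≤ (√β + 1 / √β) / 2 * ‖x‖ := by
  rw [_root_.map_smul, LinearMap.smul_apply, norm_smul, Real.norm_of_nonneg (by positivity),
    Real.one_add_eq_sqrt_add_inv_sqrt_div_two_mul hβ, mul_assoc]
  gcongr
  exact two_mul_sqrt_mul_norm_toEuclideanLin_inv_mul_le hβ W x

end Matrix

/-- For `β > 0` the operator norm of `A_β = (1+β)(I + β W Wᵀ)⁻¹ W`
is at most `(√β + 1/√β)/2`, and the affine map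
`x ↦ A_β x + (I + β W Wᵀ)⁻¹ (b + β W c)` is Lipschitz with that constant. -/
theorem stmt1 {n m : ℕ} (β : ℝ) (hβ : 0 < β)
    (W : Matrix (Fin n) (Fin m) ℝ)
    (b : EuclideanSpace ℝ (Fin n)) (c : EuclideanSpace ℝ (Fin m)) :
    ‖LinearMap.toContinuousLinearMap
        (Matrix.toEuclideanLin ((1 + β) • (((1 : Matrix (Fin n) (Fin n) ℝ) + β • (W * Wᵀ))⁻¹ * W)))‖
      ≤ (Real.sqrt β + 1 / Real.sqrt β) / 2 ∧
    ∀ x₁ x₂ : EuclideanSpace ℝ (Fin m),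
      ‖(Matrix.toEuclideanLin ((1 + β) • (((1 : Matrix (Fin n) (Fin n) ℝ) + β • (W * Wᵀ))⁻¹ * W)) x₁
          + Matrix.toEuclideanLin ((1 : Matrix (Fin n) (Fin n) ℝ) + β • (W * Wᵀ))⁻¹
              (b + β • Matrix.toEuclideanLin W c))
        - (Matrix.toEuclideanLin ((1 + β) • (((1 : Matrix (Fin n) (Fin n) ℝ) + β • (W * Wᵀ))⁻¹ * W)) x₂
          + Matrix.toEuclideanLin ((1 : Matrix (Fin n) (Fin n) ℝ) + β • (W * Wᵀ))⁻¹
              (b + β • Matrix.toEuclideanLin W c))‖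
      ≤ ((Real.sqrt β + 1 / Real.sqrt β) / 2) * ‖x₁ - x₂‖ := by
  refine ⟨ContinuousLinearMap.opNorm_le_bound _ (by positivity)
    (norm_toEuclideanLin_smul_inv_mul_le hβ W), fun x₁ x₂ => ?_⟩
  rw [add_sub_add_right_eq_sub, ← map_sub]
  exact norm_toEuclideanLin_smul_inv_mul_le hβ W (x₁ - x₂)
end

section
/- Let β > 0, let W be a real n×m matrix, let G : ℝ^n → ℝ be a convex function, and let C ⊆ ℝ^n be a nonempty closed convex set. For x ∈ ℝ^m define F_x(z) = (1/2)‖z − Wx‖² + (β/2)‖Wᵀz − x‖² + G(z). If z₁ minimizes F_{x₁} over C and z₂ minimizes F_{x₂} over C, then ‖z₁ − z₂‖ ≤ ((β^{1/2} + β^{-1/2})/2)·‖x₁ − x₂‖. In other words, the map P_{β,W,G} sending x to the minimizer of F_x over C is Lipschitz continuous with constant (β^{1/2} + β^{-1/2})/2. -/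
/-!
Since `G` is convex, comparing `F_x` at a minimizer `z` with its values along the segment from `z`
to any `z' ∈ C` gives the variational inequality
`0 ≤ ⟪z - W x, z' - z⟫ + β ⟪Wᵀ z - x, Wᵀ (z' - z)⟫ + G z' - G z`.
Adding it for `(x₁, z₁)` with `z' = z₂` and for `(x₂, z₂)` with `z' = z₁` cancels `G` and yields,
for `Δ = z₁ - z₂`, the estimate `‖Δ‖² + β ‖Wᵀ Δ‖² ≤ (1 + β) ‖x₁ - x₂‖ ‖Wᵀ Δ‖`. Maximizing the
right side minus `β ‖Wᵀ Δ‖²` over the value of `‖Wᵀ Δ‖` gives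
`‖Δ‖² ≤ (1 + β)² ‖x₁ - x₂‖² / (4β) = ((√β + 1/√β)/2)² ‖x₁ - x₂‖²`.
-/

open Matrix Set Filter Topology
open scoped InnerProductSpace

theorem nonneg_of_forall_mul_add_sq_mul_nonneg {L Q : ℝ}
    (h : ∀ t : ℝ, 0 < t → t ≤ 1 → 0 ≤ t * L + t ^ 2 * Q) : 0 ≤ L := by
  have hlim : Tendsto (fun t : ℝ => L + t * Q) (𝓝[>] 0) (𝓝 L) := by
    have : Tendsto (fun t : ℝ => L + t * Q) (𝓝 0) (𝓝 (L + 0 * Q)) :=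
      (continuous_const.add (continuous_id.mul continuous_const)).tendsto 0
    simpa using this.mono_left nhdsWithin_le_nhds
  refine ge_of_tendsto hlim ?_
  filter_upwards [Ioc_mem_nhdsGT one_pos] with t ⟨ht0, ht1⟩
  refine nonneg_of_mul_nonneg_right ?_ ht0
  linarith [h t ht0 ht1]

theorem IsMinOn.nonneg_of_add_convexOn {E : Type*} [AddCommGroup E] [Module ℝ E]
    {C : Set E} {f G : E → ℝ} {z z' : E} {L Q : ℝ}
    (hmin : IsMinOn (fun y => f y + G y) C z) (hC : Convex ℝ C) (hG : ConvexOn ℝ C G)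
    (hz : z ∈ C) (hz' : z' ∈ C)
    (hf : ∀ t : ℝ, f (z + t • (z' - z)) = f z + t * L + t ^ 2 * Q) :
    0 ≤ L + (G z' - G z) := by
  refine nonneg_of_forall_mul_add_sq_mul_nonneg (Q := Q) fun t ht0 ht1 => ?_
  have hseg : z + t • (z' - z) = (1 - t) • z + t • z' := by module
  have hmem : z + t • (z' - z) ∈ C := hseg ▸ hC hz hz' (by linarith) ht0.le (by ring)
  have hGt : G (z + t • (z' - z)) ≤ (1 - t) • G z + t • G z' :=
    hseg ▸ hG.2 hz hz' (by linarith) ht0.le (by ring)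
  have hle := isMinOn_iff.1 hmin _ hmem
  rw [hf] at hle
  simp only [smul_eq_mul] at hGt
  linarith

theorem norm_add_smul_sq {E : Type*} [NormedAddCommGroup E] [InnerProductSpace ℝ E]
    (u v : E) (t : ℝ) :
    ‖u + t • v‖ ^ 2 = ‖u‖ ^ 2 + t * (2 * ⟪u, v⟫_ℝ) + t ^ 2 * ‖v‖ ^ 2 := by
  rw [norm_add_sq_real, real_inner_smul_right, norm_smul, mul_pow, Real.norm_eq_abs, sq_abs]
  ring

section ProxObjective

variable {E F : Type*} [NormedAddCommGroup E] [InnerProductSpace ℝ E]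
  [NormedAddCommGroup F] [InnerProductSpace ℝ F]

/-- The objective `F_x` of the paper, with `B` in the role of `W` and `A` in that of `Wᵀ`. -/
noncomputable def proxObjective (A : E →ₗ[ℝ] F) (B : F →ₗ[ℝ] E) (β : ℝ) (G : E → ℝ) (x : F)
    (z : E) : ℝ :=
  1 / 2 * ‖z - B x‖ ^ 2 + β / 2 * ‖A z - x‖ ^ 2 + G z

variable {A : E →ₗ[ℝ] F} {B : F →ₗ[ℝ] E} {β : ℝ} {G : E → ℝ} {C : Set E}

theorem IsMinOn.proxObjective_variational_ineq {x : F} {z z' : E}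
    (hmin : IsMinOn (proxObjective A B β G x) C z) (hC : Convex ℝ C) (hG : ConvexOn ℝ C G)
    (hz : z ∈ C) (hz' : z' ∈ C) :
    0 ≤ ⟪z - B x, z' - z⟫_ℝ + β * ⟪A z - x, A (z' - z)⟫_ℝ + (G z' - G z) := by
  refine hmin.nonneg_of_add_convexOn (f := fun y => 1 / 2 * ‖y - B x‖ ^ 2 + β / 2 * ‖A y - x‖ ^ 2)
    (Q := 1 / 2 * ‖z' - z‖ ^ 2 + β / 2 * ‖A (z' - z)‖ ^ 2) hC hG hz hz' fun t => ?_
  have h₁ : z + t • (z' - z) - B x = (z - B x) + t • (z' - z) := by abel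
  have h₂ : A (z + t • (z' - z)) - x = (A z - x) + t • A (z' - z) := by
    rw [map_add, map_smul]; abel
  simp only [h₁, h₂, norm_add_smul_sq]
  ring

theorem norm_sq_add_mul_norm_sq_le_of_isMinOn_proxObjective
    (hAB : ∀ x z, ⟪B x, z⟫_ℝ = ⟪x, A z⟫_ℝ) (hC : Convex ℝ C) (hG : ConvexOn ℝ C G)
    {x₁ x₂ : F} {z₁ z₂ : E}
    (h₁ : IsMinOn (proxObjective A B β G x₁) C z₁) (h₂ : IsMinOn (proxObjective A B β G x₂) C z₂)
    (hz₁ : z₁ ∈ C) (hz₂ : z₂ ∈ C) :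
    ‖z₁ - z₂‖ ^ 2 + β * ‖A (z₁ - z₂)‖ ^ 2 ≤ (1 + β) * ⟪x₁ - x₂, A (z₁ - z₂)⟫_ℝ := by
  have k₁ := h₁.proxObjective_variational_ineq hC hG hz₁ hz₂
  have k₂ := h₂.proxObjective_variational_ineq hC hG hz₂ hz₁
  rw [← neg_sub z₁ z₂, map_neg, inner_neg_right, inner_neg_right] at k₁
  have e₁ : (z₂ - B x₂) - (z₁ - B x₁) = B (x₁ - x₂) - (z₁ - z₂) := by rw [map_sub]; abel
  have e₂ : (A z₂ - x₂) - (A z₁ - x₁) = (x₁ - x₂) - A (z₁ - z₂) := by rw [map_sub]; abel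
  have hsum : 0 ≤ ⟪B (x₁ - x₂) - (z₁ - z₂), z₁ - z₂⟫_ℝ
      + β * ⟪(x₁ - x₂) - A (z₁ - z₂), A (z₁ - z₂)⟫_ℝ := by
    rw [← e₁, ← e₂, inner_sub_left (z₂ - B x₂), inner_sub_left (A z₂ - x₂)]
    linarith
  rw [inner_sub_left (B _), inner_sub_left (x₁ - x₂), hAB, real_inner_self_eq_norm_sq,
    real_inner_self_eq_norm_sq] at hsum
  linarith

theorem le_of_sq_add_mul_sq_le {β d a e : ℝ} (hβ : 0 < β) (he : 0 ≤ e)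
    (h : d ^ 2 + β * a ^ 2 ≤ (1 + β) * (e * a)) : d ≤ (√β + 1 / √β) / 2 * e := by
  obtain ⟨s, hs, rfl⟩ : ∃ s, 0 < s ∧ β = s ^ 2 :=
    ⟨√β, Real.sqrt_pos.2 hβ, (Real.sq_sqrt hβ.le).symm⟩
  rw [Real.sqrt_sq hs.le]
  refine le_of_sq_le_sq ?_ (by positivity)
  have hsq : ((s + 1 / s) / 2 * e) ^ 2 = ((1 + s ^ 2) * e) ^ 2 / (4 * s ^ 2) := by
    field_simp; ring
  rw [hsq, le_div_iff₀ (by positivity)]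
  nlinarith [sq_nonneg ((1 + s ^ 2) * e - 2 * s ^ 2 * a)]

theorem norm_sub_le_of_isMinOn_proxObjective (hβ : 0 < β)
    (hAB : ∀ x z, ⟪B x, z⟫_ℝ = ⟪x, A z⟫_ℝ) (hC : Convex ℝ C) (hG : ConvexOn ℝ C G)
    {x₁ x₂ : F} {z₁ z₂ : E}
    (h₁ : IsMinOn (proxObjective A B β G x₁) C z₁) (h₂ : IsMinOn (proxObjective A B β G x₂) C z₂)
    (hz₁ : z₁ ∈ C) (hz₂ : z₂ ∈ C) :
    ‖z₁ - z₂‖ ≤ (√β + 1 / √β) / 2 * ‖x₁ - x₂‖ := by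
  have hmono := norm_sq_add_mul_norm_sq_le_of_isMinOn_proxObjective hAB hC hG h₁ h₂ hz₁ hz₂
  have hcs : (1 + β) * ⟪x₁ - x₂, A (z₁ - z₂)⟫_ℝ ≤ (1 + β) * (‖x₁ - x₂‖ * ‖A (z₁ - z₂)‖) :=
    mul_le_mul_of_nonneg_left (real_inner_le_norm _ _) (by positivity)
  exact le_of_sq_add_mul_sq_le hβ (norm_nonneg _) (hmono.trans hcs)

end ProxObjective

theorem stmt3_general {n m : ℕ} (β : ℝ) (hβ : 0 < β)
    (W : Matrix (Fin n) (Fin m) ℝ)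
    (G : EuclideanSpace ℝ (Fin n) → ℝ) (hG : ConvexOn ℝ Set.univ G)
    (C : Set (EuclideanSpace ℝ (Fin n)))
    (hCcv : Convex ℝ C)
    (x₁ x₂ : EuclideanSpace ℝ (Fin m))
    (z₁ z₂ : EuclideanSpace ℝ (Fin n))
    (hz₁ : z₁ ∈ C ∧ ∀ z ∈ C,
      (1/2) * ‖z₁ - Matrix.toEuclideanLin W x₁‖ ^ 2
          + (β/2) * ‖Matrix.toEuclideanLin Wᵀ z₁ - x₁‖ ^ 2 + G z₁
        ≤ (1/2) * ‖z - Matrix.toEuclideanLin W x₁‖ ^ 2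
          + (β/2) * ‖Matrix.toEuclideanLin Wᵀ z - x₁‖ ^ 2 + G z)
    (hz₂ : z₂ ∈ C ∧ ∀ z ∈ C,
      (1/2) * ‖z₂ - Matrix.toEuclideanLin W x₂‖ ^ 2
          + (β/2) * ‖Matrix.toEuclideanLin Wᵀ z₂ - x₂‖ ^ 2 + G z₂
        ≤ (1/2) * ‖z - Matrix.toEuclideanLin W x₂‖ ^ 2
          + (β/2) * ‖Matrix.toEuclideanLin Wᵀ z - x₂‖ ^ 2 + G z) :
    ‖z₁ - z₂‖ ≤ ((Real.sqrt β + 1 / Real.sqrt β) / 2) * ‖x₁ - x₂‖ := by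
  have hadjoint : toEuclideanLin Wᵀ = LinearMap.adjoint (toEuclideanLin W) := by
    rw [← toEuclideanLin_conjTranspose_eq_adjoint, conjTranspose_eq_transpose_of_trivial]
  have hAB : ∀ x z, ⟪toEuclideanLin W x, z⟫_ℝ = ⟪x, toEuclideanLin Wᵀ z⟫_ℝ := fun x z => by
    rw [hadjoint, LinearMap.adjoint_inner_right]
  exact norm_sub_le_of_isMinOn_proxObjective hβ hAB hCcv (hG.subset (subset_univ C) hCcv)
    (isMinOn_iff.2 hz₁.2) (isMinOn_iff.2 hz₂.2) hz₁.1 hz₂.1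

/-- (Lemma 1 of the paper.) Let `β > 0`, `W` a real `n × m` matrix,
`G` convex, `C` a nonempty closed convex set. If `z₁` minimizes
`F_{x₁}(z) = (1/2)‖z − Wx₁‖² + (β/2)‖Wᵀz − x₁‖² + G(z)` over `C` and `z₂` minimizes
`F_{x₂}` over `C`, then `‖z₁ − z₂‖ ≤ ((√β + 1/√β)/2)‖x₁ − x₂‖`, i.e. the map
`P_{β,W,G}` is `((√β + β^{-1/2})/2)`-Lipschitz. -/
theorem stmt3 {n m : ℕ} (β : ℝ) (hβ : 0 < β)
    (W : Matrix (Fin n) (Fin m) ℝ)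
    (G : EuclideanSpace ℝ (Fin n) → ℝ) (hG : ConvexOn ℝ Set.univ G)
    (C : Set (EuclideanSpace ℝ (Fin n)))
    (hCne : C.Nonempty) (hCcl : IsClosed C) (hCcv : Convex ℝ C)
    (x₁ x₂ : EuclideanSpace ℝ (Fin m))
    (z₁ z₂ : EuclideanSpace ℝ (Fin n))
    (hz₁ : z₁ ∈ C ∧ ∀ z ∈ C,
      (1/2) * ‖z₁ - Matrix.toEuclideanLin W x₁‖ ^ 2
          + (β/2) * ‖Matrix.toEuclideanLin Wᵀ z₁ - x₁‖ ^ 2 + G z₁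
        ≤ (1/2) * ‖z - Matrix.toEuclideanLin W x₁‖ ^ 2
          + (β/2) * ‖Matrix.toEuclideanLin Wᵀ z - x₁‖ ^ 2 + G z)
    (hz₂ : z₂ ∈ C ∧ ∀ z ∈ C,
      (1/2) * ‖z₂ - Matrix.toEuclideanLin W x₂‖ ^ 2
          + (β/2) * ‖Matrix.toEuclideanLin Wᵀ z₂ - x₂‖ ^ 2 + G z₂
        ≤ (1/2) * ‖z - Matrix.toEuclideanLin W x₂‖ ^ 2
          + (β/2) * ‖Matrix.toEuclideanLin Wᵀ z - x₂‖ ^ 2 + G z) :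
    ‖z₁ - z₂‖ ≤ ((Real.sqrt β + 1 / Real.sqrt β) / 2) * ‖x₁ - x₂‖ :=
  stmt3_general β hβ W G hG C hCcv x₁ x₂ z₁ z₂ hz₁ hz₂
end

section
/- Let W be a real n×m matrix, let G : ℝ^n → ℝ be a convex function, and let C ⊆ ℝ^n be a nonempty closed convex set. For x ∈ ℝ^m define F_x(z) = (1/2)‖z − Wx‖² + (1/2)‖Wᵀz − x‖² + G(z). If z₁ minimizes F_{x₁} over C and z₂ minimizes F_{x₂} over C, then ‖z₁ − z₂‖ ≤ ‖x₁ − x₂‖; that is, the map P_{1,W,G} sending x to the minimizer of F_x over C is 1-Lipschitz (non-expansive). -/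
/-!
A minimizer `z` of `F_x = q_x + G` over `C`, with `q_x` the smooth quadratic part, satisfies the
variational inequality `Dq_x(z) (z' - z) + G z' - G z ≥ 0` for every `z' ∈ C`. Adding the
inequalities at `z₁` (tested at `z₂`) and at `z₂` (tested at `z₁`) cancels `G`; with
`d = z₁ - z₂` and `e = x₁ - x₂` what remains is
`‖d‖² + ‖Wᵀd‖² ≤ 2⟪Wᵀd, e⟫ ≤ ‖Wᵀd‖² + ‖e‖²`.
-/

open Matrix Set
open scoped RealInnerProductSpace

theorem IsMinOn.hasFDerivAt_add_convexOn_nonneg {E : Type*} [NormedAddCommGroup E]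
    [NormedSpace ℝ E] {f G : E → ℝ} {f' : E →L[ℝ] ℝ} {C : Set E} {z z' : E}
    (hmin : IsMinOn (f + G) C z) (hf : HasFDerivAt f f' z) (hG : ConvexOn ℝ C G)
    (hz : z ∈ C) (hz' : z' ∈ C) :
    0 ≤ f' (z' - z) + (G z' - G z) := by
  -- Bounding `G` on the segment by its chord makes `φ` minimal at `0` on `[0, 1]`.
  set φ : ℝ → ℝ := fun t ↦ f (z + t • (z' - z)) + t * (G z' - G z)
  have hφmin : IsMinOn φ (Icc 0 1) 0 := by
    rintro t ⟨ht₀, ht₁⟩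
    have hcomb : z + t • (z' - z) = (1 - t) • z + t • z' := by module
    have hGt : G ((1 - t) • z + t • z') ≤ (1 - t) * G z + t * G z' :=
      hG.2 hz hz' (sub_nonneg.2 ht₁) ht₀ (by ring)
    have hft : f z + G z ≤ f ((1 - t) • z + t • z') + G ((1 - t) • z + t • z') :=
      hmin (hG.1 hz hz' (sub_nonneg.2 ht₁) ht₀ (by ring))
    show f (z + (0 : ℝ) • (z' - z)) + 0 * _ ≤ f (z + t • (z' - z)) + t * _
    rw [zero_smul, add_zero, zero_mul, add_zero, hcomb]
    linarith
  have hφ : HasDerivAt φ (f' (z' - z) + (G z' - G z)) 0 := by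
    have hline : HasDerivAt (fun t : ℝ ↦ z + t • (z' - z)) (z' - z) 0 := by
      simpa using ((hasDerivAt_id (0 : ℝ)).smul_const (z' - z)).const_add z
    exact (hf.comp_hasDerivAt_of_eq 0 hline (by simp)).add (hasDerivAt_mul_const _)
  have hone : (1 : ℝ) ∈ posTangentConeAt (Icc 0 1) 0 :=
    mem_posTangentConeAt_of_segment_subset (by simp [segment_eq_Icc])
  simpa using hφmin.localize.hasFDerivWithinAt_nonneg hφ.hasFDerivAt.hasFDerivWithinAt hone

theorem hasFDerivAt_half_norm_map_sub_sq {E F : Type*} [NormedAddCommGroup E]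
    [InnerProductSpace ℝ E] [NormedAddCommGroup F] [InnerProductSpace ℝ F]
    (B : E →L[ℝ] F) (b : F) (z : E) :
    HasFDerivAt (fun w ↦ (1 / 2) * ‖B w - b‖ ^ 2) ((innerSL ℝ (B z - b)).comp B) z :=
  ((B.hasFDerivAt.sub_const b).norm_sq.const_mul (1 / 2)).congr_fderiv (by ext v; simp)

theorem norm_le_norm_of_sq_add_sq_le_two_mul_inner {E F : Type*} [NormedAddCommGroup E]
    [NormedAddCommGroup F] [InnerProductSpace ℝ F] {d : E} {v e : F}
    (h : ‖d‖ ^ 2 + ‖v‖ ^ 2 ≤ 2 * ⟪v, e⟫) : ‖d‖ ≤ ‖e‖ := by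
  have hcs : ⟪v, e⟫ ≤ ‖v‖ * ‖e‖ := real_inner_le_norm v e
  have hsq : ‖d‖ ^ 2 ≤ ‖e‖ ^ 2 := by nlinarith [sq_nonneg (‖v‖ - ‖e‖)]
  exact (pow_le_pow_iff_left₀ (norm_nonneg d) (norm_nonneg e) two_ne_zero).1 hsq

section

variable {E F : Type*} [NormedAddCommGroup E] [InnerProductSpace ℝ E]
  [NormedAddCommGroup F] [InnerProductSpace ℝ F]

theorem IsMinOn.inner_add_inner_map_add_sub_nonneg {B : E →L[ℝ] F} {a : E} {b : F}
    {G : E → ℝ} {C : Set E} {z z' : E} (hG : ConvexOn ℝ C G) (hz : z ∈ C) (hz' : z' ∈ C)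
    (hmin : IsMinOn (fun w ↦ (1 / 2) * ‖w - a‖ ^ 2 + (1 / 2) * ‖B w - b‖ ^ 2 + G w) C z) :
    0 ≤ ⟪z - a, z' - z⟫ + ⟪B z - b, B (z' - z)⟫ + (G z' - G z) := by
  have hq := (hasFDerivAt_half_norm_map_sub_sq (ContinuousLinearMap.id ℝ E) a z).add
    (hasFDerivAt_half_norm_map_sub_sq B b z)
  simpa only [_root_.add_apply, ContinuousLinearMap.comp_apply, innerSL_apply_apply,
    ContinuousLinearMap.id_apply, add_assoc] using hmin.hasFDerivAt_add_convexOn_nonneg hq hG hz hz'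

theorem inner_add_inner_sub_comm (p q v w : E) :
    ⟪p, w - v⟫ + ⟪q, v - w⟫ = ⟪q - p, v - w⟫ := by
  rw [← neg_sub v w, inner_neg_right, inner_sub_left]
  ring

theorem norm_sub_le_norm_sub_of_isMinOn (A : F →ₗ[ℝ] E) (B : E →L[ℝ] F)
    (hAB : ∀ z x, ⟪B z, x⟫ = ⟪z, A x⟫) {G : E → ℝ} {C : Set E} (hG : ConvexOn ℝ C G)
    {x₁ x₂ : F} {z₁ z₂ : E} (hz₁ : z₁ ∈ C) (hz₂ : z₂ ∈ C)
    (h₁ : IsMinOn (fun z ↦ (1 / 2) * ‖z - A x₁‖ ^ 2 + (1 / 2) * ‖B z - x₁‖ ^ 2 + G z) C z₁)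
    (h₂ : IsMinOn (fun z ↦ (1 / 2) * ‖z - A x₂‖ ^ 2 + (1 / 2) * ‖B z - x₂‖ ^ 2 + G z) C z₂) :
    ‖z₁ - z₂‖ ≤ ‖x₁ - x₂‖ := by
  have hvi₁ := h₁.inner_add_inner_map_add_sub_nonneg hG hz₁ hz₂
  have hvi₂ := h₂.inner_add_inner_map_add_sub_nonneg hG hz₂ hz₁
  have hE : ⟪z₁ - A x₁, z₂ - z₁⟫ + ⟪z₂ - A x₂, z₁ - z₂⟫
      = ⟪B (z₁ - z₂), x₁ - x₂⟫ - ‖z₁ - z₂‖ ^ 2 := by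
    rw [inner_add_inner_sub_comm, show z₂ - A x₂ - (z₁ - A x₁) = A (x₁ - x₂) - (z₁ - z₂) by
      rw [map_sub]; abel, inner_sub_left, real_inner_comm, ← hAB, real_inner_self_eq_norm_sq]
  have hF : ⟪B z₁ - x₁, B (z₂ - z₁)⟫ + ⟪B z₂ - x₂, B (z₁ - z₂)⟫
      = ⟪B (z₁ - z₂), x₁ - x₂⟫ - ‖B (z₁ - z₂)‖ ^ 2 := by
    rw [map_sub, map_sub, inner_add_inner_sub_comm, ← map_sub,
      show B z₂ - x₂ - (B z₁ - x₁) = (x₁ - x₂) - B (z₁ - z₂) by rw [map_sub]; abel,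
      inner_sub_left, real_inner_comm, real_inner_self_eq_norm_sq]
  exact norm_le_norm_of_sq_add_sq_le_two_mul_inner (v := B (z₁ - z₂)) (by linarith)

end

theorem Matrix.inner_toEuclideanLin_transpose {ι κ : Type*} [Fintype ι] [Fintype κ]
    [DecidableEq ι] [DecidableEq κ] (W : Matrix ι κ ℝ) (z : EuclideanSpace ℝ ι)
    (x : EuclideanSpace ℝ κ) :
    ⟪toEuclideanLin Wᵀ z, x⟫ = ⟪z, toEuclideanLin W x⟫ := by
  rw [← conjTranspose_eq_transpose_of_trivial, toEuclideanLin_conjTranspose_eq_adjoint,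
    LinearMap.adjoint_inner_left]

theorem stmt4_general {n m : ℕ}
    (W : Matrix (Fin n) (Fin m) ℝ)
    (G : EuclideanSpace ℝ (Fin n) → ℝ) (hG : ConvexOn ℝ Set.univ G)
    (C : Set (EuclideanSpace ℝ (Fin n)))
    (hCcv : Convex ℝ C)
    (x₁ x₂ : EuclideanSpace ℝ (Fin m))
    (z₁ z₂ : EuclideanSpace ℝ (Fin n))
    (hz₁ : z₁ ∈ C ∧ ∀ z ∈ C,
      (1/2) * ‖z₁ - Matrix.toEuclideanLin W x₁‖ ^ 2
          + (1/2) * ‖Matrix.toEuclideanLin Wᵀ z₁ - x₁‖ ^ 2 + G z₁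
        ≤ (1/2) * ‖z - Matrix.toEuclideanLin W x₁‖ ^ 2
          + (1/2) * ‖Matrix.toEuclideanLin Wᵀ z - x₁‖ ^ 2 + G z)
    (hz₂ : z₂ ∈ C ∧ ∀ z ∈ C,
      (1/2) * ‖z₂ - Matrix.toEuclideanLin W x₂‖ ^ 2
          + (1/2) * ‖Matrix.toEuclideanLin Wᵀ z₂ - x₂‖ ^ 2 + G z₂
        ≤ (1/2) * ‖z - Matrix.toEuclideanLin W x₂‖ ^ 2
          + (1/2) * ‖Matrix.toEuclideanLin Wᵀ z - x₂‖ ^ 2 + G z) :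
    ‖z₁ - z₂‖ ≤ ‖x₁ - x₂‖ :=
  norm_sub_le_norm_sub_of_isMinOn (toEuclideanLin W)
    (LinearMap.toContinuousLinearMap (toEuclideanLin Wᵀ)) (inner_toEuclideanLin_transpose W)
    (hG.subset (subset_univ C) hCcv) hz₁.1 hz₂.1 (isMinOn_iff.2 hz₁.2) (isMinOn_iff.2 hz₂.2)

/-- (Corollary: `P_{1,W,G}` is 1-Lipschitz.) With
`F_x(z) = (1/2)‖z − Wx‖² + (1/2)‖Wᵀz − x‖² + G(z)`, if `z₁` minimizes `F_{x₁}`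
over the nonempty closed convex set `C` and `z₂` minimizes `F_{x₂}` over `C`,
then `‖z₁ − z₂‖ ≤ ‖x₁ − x₂‖`. -/
theorem stmt4 {n m : ℕ}
    (W : Matrix (Fin n) (Fin m) ℝ)
    (G : EuclideanSpace ℝ (Fin n) → ℝ) (hG : ConvexOn ℝ Set.univ G)
    (C : Set (EuclideanSpace ℝ (Fin n)))
    (hCne : C.Nonempty) (hCcl : IsClosed C) (hCcv : Convex ℝ C)
    (x₁ x₂ : EuclideanSpace ℝ (Fin m))
    (z₁ z₂ : EuclideanSpace ℝ (Fin n))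
    (hz₁ : z₁ ∈ C ∧ ∀ z ∈ C,
      (1/2) * ‖z₁ - Matrix.toEuclideanLin W x₁‖ ^ 2
          + (1/2) * ‖Matrix.toEuclideanLin Wᵀ z₁ - x₁‖ ^ 2 + G z₁
        ≤ (1/2) * ‖z - Matrix.toEuclideanLin W x₁‖ ^ 2
          + (1/2) * ‖Matrix.toEuclideanLin Wᵀ z - x₁‖ ^ 2 + G z)
    (hz₂ : z₂ ∈ C ∧ ∀ z ∈ C,
      (1/2) * ‖z₂ - Matrix.toEuclideanLin W x₂‖ ^ 2
          + (1/2) * ‖Matrix.toEuclideanLin Wᵀ z₂ - x₂‖ ^ 2 + G z₂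
        ≤ (1/2) * ‖z - Matrix.toEuclideanLin W x₂‖ ^ 2
          + (1/2) * ‖Matrix.toEuclideanLin Wᵀ z - x₂‖ ^ 2 + G z) :
    ‖z₁ - z₂‖ ≤ ‖x₁ - x₂‖ :=
  stmt4_general W G hG C hCcv x₁ x₂ z₁ z₂ hz₁ hz₂
end

section
/- Consider an L-layer lifted regression/reconstruction network: let d₀, d₁, …, d_L be positive integers, for k = 0, …, L−1 let W_k be a real d_{k+1}×d_k matrix, b_k ∈ ℝ^{d_{k+1}}, c_k ∈ ℝ^{d_k}, let β₁, …, β_L ≥ 0, and let C_k ⊆ ℝ^{d_k} (k = 1, …, L) be nonempty closed convex sets. For an input x ∈ ℝ^{d₀}, define the energy E(z; x) = (1/2)·Σ_{k=0}^{L−1} ( ‖z_{k+1} − W_k z_k − b_k‖² + β_{k+1}·‖W_kᵀ z_{k+1} − z_k − c_k‖² ) for tuples z = (z₁, …, z_L) with z_k ∈ C_k, where z₀ := x. For k = 1, …, L set ρ_k = (β_k^{1/2} + β_k^{-1/2})/2 if β_k > 0 and ρ_k = ‖W_{k−1}‖₂ if β_k = 0. If z* minimizes E(·; x) over C₁×···×C_L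 and z*' minimizes E(·; x') over C₁×···×C_L, then ‖z*_L − z*'_L‖ ≤ (Π_{k=1}^{L} ρ_k)·‖x − x'‖; that is, the mapping from the input x to the last-layer activations z*_L(x) is Lipschitz continuous with constant Π_{k=1}^{L} ρ_k. -/
open Matrix

/-!
Both minimizers satisfy the first-order (variational) inequality of the convex quadratic energy on
the convex feasible set. Test it at `z*` in the direction that moves the layers above `i` from `z*`
to `z*'`, and at `z*'` in the opposite direction, and add: the data `b, c` cancel, the layers above
`i + 1` contribute squares, and with `u = z*_i - z*'_i`, `v = z*_{i+1} - z*'_{i+1}`, `A = W_i`,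
`β = β_{i+1}` what remains is `‖v‖² + β ‖Aᵀv‖² ≤ (1 + β) ⟪u, Aᵀv⟫ ≤ (1 + β) ‖u‖ ‖Aᵀv‖`.
For `β > 0`, AM-GM `2 √β ‖v‖ ‖Aᵀv‖ ≤ ‖v‖² + β ‖Aᵀv‖²` gives `‖v‖ ≤ ρ ‖u‖`; for `β = 0` the
inequality reads `‖v‖² ≤ ⟪Au, v⟫`. So each layer is `ρ_{i+1}`-Lipschitz in the previous one.
-/

open Filter Topology

open scoped RealInnerProductSpace

theorem nonneg_of_forall_mul_add_sq_mul_nonneg_s8 {D Q : ℝ}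
    (h : ∀ θ : ℝ, 0 < θ → θ ≤ 1 → 0 ≤ θ * D + θ ^ 2 * Q) : 0 ≤ D := by
  have hlim : Tendsto (fun θ : ℝ => D + θ * Q) (𝓝[>] 0) (𝓝 D) := by
    have : Tendsto (fun θ : ℝ => D + θ * Q) (𝓝 0) (𝓝 (D + 0 * Q)) :=
      (continuous_const.add (continuous_id.mul continuous_const)).tendsto 0
    simpa using this.mono_left nhdsWithin_le_nhds
  refine ge_of_tendsto hlim ?_
  filter_upwards [Ioo_mem_nhdsGT one_pos] with θ ⟨hθ0, hθ1⟩
  have := h θ hθ0 hθ1.le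
  nlinarith

theorem le_mul_of_sq_add_mul_sq_le {β s t a : ℝ} (hβ : 0 < β) (ht : 0 ≤ t)
    (ha : 0 ≤ a) (h : s ^ 2 + β * t ^ 2 ≤ (1 + β) * (a * t)) :
    s ≤ (√β + 1 / √β) / 2 * a := by
  obtain ⟨r, hr, rfl⟩ : ∃ r, 0 < r ∧ β = r ^ 2 :=
    ⟨√β, Real.sqrt_pos.mpr hβ, (Real.sq_sqrt hβ.le).symm⟩
  rw [Real.sqrt_sq hr.le, show (r + 1 / r) / 2 * a = (1 + r ^ 2) * a / (2 * r) by field_simp; ring,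
    le_div_iff₀ (by positivity)]
  rcases ht.eq_or_lt with rfl | ht
  · obtain rfl : s = 0 := by nlinarith
    simpa using mul_nonneg (by positivity : (0:ℝ) ≤ 1 + r ^ 2) ha
  · nlinarith [sq_nonneg (s - r * t)]

theorem le_prod_Icc_mul_of_succ_le_mul {a ρ : ℕ → ℝ} {n : ℕ} (hρ : ∀ i < n, 0 ≤ ρ (i + 1))
    (ha : ∀ i < n, a (i + 1) ≤ ρ (i + 1) * a i) :
    a n ≤ (∏ k ∈ Finset.Icc 1 n, ρ k) * a 0 := by
  induction n with
  | zero => simp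
  | succ n ih =>
    rw [Finset.prod_Icc_succ_top (by omega)]
    calc a (n + 1) ≤ ρ (n + 1) * a n := ha n (by omega)
      _ ≤ ρ (n + 1) * ((∏ k ∈ Finset.Icc 1 n, ρ k) * a 0) :=
          mul_le_mul_of_nonneg_left (ih (fun i hi => hρ i (by omega)) fun i hi => ha i (by omega))
            (hρ n (by omega))
      _ = (∏ k ∈ Finset.Icc 1 n, ρ k) * ρ (n + 1) * a 0 := by ring

section Layer

variable {E F : Type*} [NormedAddCommGroup E] [InnerProductSpace ℝ E]
  [NormedAddCommGroup F] [InnerProductSpace ℝ F]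

noncomputable def layerConstant (β : ℝ) (A : E →L[ℝ] F) : ℝ :=
  if 0 < β then (√β + 1 / √β) / 2 else ‖A‖

theorem layerConstant_nonneg (β : ℝ) (A : E →L[ℝ] F) : 0 ≤ layerConstant β A := by
  unfold layerConstant
  split_ifs <;> positivity

theorem norm_le_layerConstant_mul [CompleteSpace E] [CompleteSpace F] {β : ℝ} (hβ : 0 ≤ β)
    (A : E →L[ℝ] F) {u : E} {v : F}
    (h : ⟪v - A u, v⟫ + β * ⟪A.adjoint v - u, A.adjoint v⟫ ≤ 0) :
    ‖v‖ ≤ layerConstant β A * ‖u‖ := by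
  set p := A.adjoint v
  have hAp : ⟪A u, v⟫ = ⟪u, p⟫ := (A.adjoint_inner_right u v).symm
  have key : ‖v‖ ^ 2 + β * ‖p‖ ^ 2 ≤ (1 + β) * ⟪u, p⟫ := by
    rw [inner_sub_left, inner_sub_left, hAp, real_inner_self_eq_norm_sq,
      real_inner_self_eq_norm_sq] at h
    linarith
  unfold layerConstant
  split_ifs with hpos
  · refine le_mul_of_sq_add_mul_sq_le hpos (norm_nonneg p) (norm_nonneg u)
      (key.trans (mul_le_mul_of_nonneg_left (real_inner_le_norm u p) (by linarith)))
  · obtain rfl : β = 0 := le_antisymm (not_lt.mp hpos) hβ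
    have hv : ‖v‖ ^ 2 ≤ ‖A‖ * ‖u‖ * ‖v‖ := calc
      ‖v‖ ^ 2 ≤ ⟪A u, v⟫ := by rw [hAp]; linarith
      _ ≤ ‖A u‖ * ‖v‖ := real_inner_le_norm _ _
      _ ≤ ‖A‖ * ‖u‖ * ‖v‖ := mul_le_mul_of_nonneg_right (A.le_opNorm u) (norm_nonneg v)
    nlinarith [norm_nonneg v, mul_nonneg (norm_nonneg A) (norm_nonneg u)]

end Layer

theorem Matrix.toEuclideanLin_transpose_apply {m n : Type*} [Fintype m] [DecidableEq m]
    [Fintype n] [DecidableEq n] (A : Matrix m n ℝ) (v : EuclideanSpace ℝ m) :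
    toEuclideanLin Aᵀ v = (LinearMap.toContinuousLinearMap (toEuclideanLin A)).adjoint v := by
  rw [← conjTranspose_eq_transpose_of_trivial, toEuclideanLin_conjTranspose_eq_adjoint,
    ← LinearMap.adjoint_toContinuousLinearMap]
  rfl

namespace LiftedNetwork

abbrev Activations (d : ℕ → ℕ) := (k : ℕ) → EuclideanSpace ℝ (Fin (d k))

variable {d : ℕ → ℕ}

def feasibleSet (C : (k : ℕ) → Set (EuclideanSpace ℝ (Fin (d k)))) (L : ℕ)
    (x : EuclideanSpace ℝ (Fin (d 0))) : Set (Activations d) :=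
  {z | z 0 = x ∧ ∀ k, 1 ≤ k → k ≤ L → z k ∈ C k}

def tailAfter (i : ℕ) (u : Activations d) : Activations d :=
  fun k => if i < k then u k else 0

theorem tailAfter_neg (i : ℕ) (u : Activations d) : tailAfter i (-u) = -tailAfter i u := by
  funext k
  by_cases h : i < k <;> simp [tailAfter, h]

section Feasible

variable {C : (k : ℕ) → Set (EuclideanSpace ℝ (Fin (d k)))} {L : ℕ}

theorem convex_feasibleSet (hC : ∀ k, 1 ≤ k → k ≤ L → Convex ℝ (C k))
    (x : EuclideanSpace ℝ (Fin (d 0))) : Convex ℝ (feasibleSet C L x) := by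
  rintro z ⟨hz0, hz⟩ y ⟨hy0, hy⟩ s t hs ht hst
  refine ⟨?_, fun k hk1 hk2 => hC k hk1 hk2 (hz k hk1 hk2) (hy k hk1 hk2) hs ht hst⟩
  simp [hz0, hy0, ← add_smul, hst]

theorem add_tailAfter_sub_mem_feasibleSet {x x' : EuclideanSpace ℝ (Fin (d 0))}
    {z z' : Activations d} (hz : z ∈ feasibleSet C L x) (hz' : z' ∈ feasibleSet C L x')
    (i : ℕ) : z + tailAfter i (z' - z) ∈ feasibleSet C L x := by
  refine ⟨by simp [tailAfter, hz.1], fun k hk1 hk2 => ?_⟩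
  by_cases h : i < k <;> simp [tailAfter, h, hz.2 k hk1 hk2, hz'.2 k hk1 hk2]

end Feasible

variable (W : (k : ℕ) → Matrix (Fin (d (k + 1))) (Fin (d k)) ℝ)

noncomputable def forwardMap (k : ℕ) : Activations d →ₗ[ℝ] EuclideanSpace ℝ (Fin (d (k + 1))) :=
  LinearMap.proj (k + 1) -
    (toEuclideanLin (W k)).comp (LinearMap.proj (φ := fun k => EuclideanSpace ℝ (Fin (d k))) k)

noncomputable def backwardMap (k : ℕ) : Activations d →ₗ[ℝ] EuclideanSpace ℝ (Fin (d k)) :=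
  (toEuclideanLin (W k)ᵀ).comp
      (LinearMap.proj (φ := fun k => EuclideanSpace ℝ (Fin (d k))) (k + 1)) -
    LinearMap.proj k

@[simp] theorem forwardMap_apply (k : ℕ) (z : Activations d) :
    forwardMap W k z = z (k + 1) - toEuclideanLin (W k) (z k) := rfl

@[simp] theorem backwardMap_apply (k : ℕ) (z : Activations d) :
    backwardMap W k z = toEuclideanLin (W k)ᵀ (z (k + 1)) - z k := rfl

variable (b : (k : ℕ) → EuclideanSpace ℝ (Fin (d (k + 1))))
  (c : (k : ℕ) → EuclideanSpace ℝ (Fin (d k))) (β : ℕ → ℝ) (L : ℕ)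

noncomputable def energy (z : Activations d) : ℝ :=
  (1 / 2) * ∑ k ∈ Finset.range L,
    (‖forwardMap W k z - b k‖ ^ 2 + β (k + 1) * ‖backwardMap W k z - c k‖ ^ 2)

noncomputable def energyDeriv (z w : Activations d) : ℝ :=
  ∑ k ∈ Finset.range L, (⟪forwardMap W k z - b k, forwardMap W k w⟫
    + β (k + 1) * ⟪backwardMap W k z - c k, backwardMap W k w⟫)

noncomputable def energyForm (u w : Activations d) : ℝ :=
  ∑ k ∈ Finset.range L, (⟪forwardMap W k u, forwardMap W k w⟫
    + β (k + 1) * ⟪backwardMap W k u, backwardMap W k w⟫)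

theorem energy_add_smul (z w : Activations d) (θ : ℝ) :
    energy W b c β L (z + θ • w) = energy W b c β L z + θ * energyDeriv W b c β L z w
      + θ ^ 2 * (energyForm W β L w w / 2) := by
  have hsq : ∀ {n : ℕ} (r p : EuclideanSpace ℝ (Fin n)),
      ‖r + θ • p‖ ^ 2 = ‖r‖ ^ 2 + θ * (2 * ⟪r, p⟫) + θ ^ 2 * ⟪p, p⟫ := by
    intro n r p
    rw [norm_add_sq_real, inner_smul_right, norm_smul, mul_pow, Real.norm_eq_abs, sq_abs,
      real_inner_self_eq_norm_sq]
    ring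
  simp only [energy, energyDeriv, energyForm, map_add, map_smul, add_sub_right_comm _ (θ • _),
    hsq, Finset.mul_sum, Finset.sum_div, ← Finset.sum_add_distrib]
  refine Finset.sum_congr rfl fun k _ => ?_
  ring

theorem energyDeriv_neg (z w : Activations d) :
    energyDeriv W b c β L z (-w) = -energyDeriv W b c β L z w := by
  simp only [energyDeriv, map_neg, inner_neg_right, mul_neg, ← neg_add, Finset.sum_neg_distrib]

theorem energyDeriv_sub_energyDeriv (z z' w : Activations d) :
    energyDeriv W b c β L z w - energyDeriv W b c β L z' w = energyForm W β L (z - z') w := by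
  simp only [energyDeriv, energyForm, ← Finset.sum_sub_distrib, map_sub, inner_sub_left]
  refine Finset.sum_congr rfl fun k _ => ?_
  ring

theorem energyDeriv_nonneg_of_isMinOn {S : Set (Activations d)} (hS : Convex ℝ S)
    {z w : Activations d} (hmin : IsMinOn (energy W b c β L) S z) (hz : z ∈ S)
    (hzw : z + w ∈ S) : 0 ≤ energyDeriv W b c β L z w := by
  refine nonneg_of_forall_mul_add_sq_mul_nonneg_s8 (Q := energyForm W β L w w / 2)
    fun θ hθ0 hθ1 => ?_
  have := isMinOn_iff.mp hmin _ (hS.add_smul_mem hz hzw ⟨hθ0.le, hθ1⟩)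
  rw [energy_add_smul] at this
  linarith

theorem energyForm_tailAfter_nonpos {C : (k : ℕ) → Set (EuclideanSpace ℝ (Fin (d k)))}
    (hC : ∀ k, 1 ≤ k → k ≤ L → Convex ℝ (C k)) {x x' : EuclideanSpace ℝ (Fin (d 0))}
    {z z' : Activations d} (hz : z ∈ feasibleSet C L x)
    (hmin : IsMinOn (energy W b c β L) (feasibleSet C L x) z) (hz' : z' ∈ feasibleSet C L x')
    (hmin' : IsMinOn (energy W b c β L) (feasibleSet C L x') z') (i : ℕ) :
    energyForm W β L (z - z') (tailAfter i (z - z')) ≤ 0 := by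
  have h := energyDeriv_nonneg_of_isMinOn W b c β L (convex_feasibleSet hC x) hmin hz
    (add_tailAfter_sub_mem_feasibleSet hz hz' i)
  have h' := energyDeriv_nonneg_of_isMinOn W b c β L (convex_feasibleSet hC x') hmin' hz'
    (add_tailAfter_sub_mem_feasibleSet hz' hz i)
  rw [← neg_sub z z', tailAfter_neg, energyDeriv_neg] at h
  linarith [energyDeriv_sub_energyDeriv W b c β L z z' (tailAfter i (z - z'))]

theorem layer_le_energyForm_tailAfter (hβ : ∀ k, 1 ≤ k → k ≤ L → 0 ≤ β k) (u : Activations d)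
    {i : ℕ} (hi : i < L) :
    ⟪u (i + 1) - toEuclideanLin (W i) (u i), u (i + 1)⟫
      + β (i + 1) * ⟪toEuclideanLin (W i)ᵀ (u (i + 1)) - u i, toEuclideanLin (W i)ᵀ (u (i + 1))⟫
      ≤ energyForm W β L u (tailAfter i u) := by
  rw [energyForm, ← Finset.add_sum_erase _ _ (Finset.mem_range.mpr hi)]
  refine le_add_of_le_of_nonneg (le_of_eq ?_) (Finset.sum_nonneg fun k hk => ?_)
  · simp [tailAfter]
  obtain ⟨hki, hkL⟩ : k ≠ i ∧ k < L := by simpa using hk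
  rcases hki.lt_or_gt with hlt | hgt
  · simp [tailAfter, hlt.not_gt, Nat.not_lt.mpr hlt]
  · simp only [forwardMap_apply, backwardMap_apply, tailAfter, if_pos hgt,
      if_pos (hgt.trans k.lt_succ_self), real_inner_self_eq_norm_sq]
    have := hβ (k + 1) (by omega) (by omega)
    positivity

theorem norm_sub_succ_le_layerConstant_mul (hβ : ∀ k, 1 ≤ k → k ≤ L → 0 ≤ β k)
    {C : (k : ℕ) → Set (EuclideanSpace ℝ (Fin (d k)))} (hC : ∀ k, 1 ≤ k → k ≤ L → Convex ℝ (C k))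
    {x x' : EuclideanSpace ℝ (Fin (d 0))} {z z' : Activations d} (hz : z ∈ feasibleSet C L x)
    (hmin : IsMinOn (energy W b c β L) (feasibleSet C L x) z) (hz' : z' ∈ feasibleSet C L x')
    (hmin' : IsMinOn (energy W b c β L) (feasibleSet C L x') z') {i : ℕ} (hi : i < L) :
    ‖z (i + 1) - z' (i + 1)‖ ≤
      layerConstant (β (i + 1)) (LinearMap.toContinuousLinearMap (toEuclideanLin (W i)))
        * ‖z i - z' i‖ := by
  refine norm_le_layerConstant_mul (hβ (i + 1) (by omega) hi) _ ?_
  simp only [← toEuclideanLin_transpose_apply, LinearMap.coe_toContinuousLinearMap']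
  simpa using (layer_le_energyForm_tailAfter W β L hβ (z - z') hi).trans
    (energyForm_tailAfter_nonpos W b c β L hC hz hmin hz' hmin' i)

end LiftedNetwork

theorem stmt8_general (L : ℕ)
    (d : ℕ → ℕ)
    (W : (k : ℕ) → Matrix (Fin (d (k + 1))) (Fin (d k)) ℝ)
    (b : (k : ℕ) → EuclideanSpace ℝ (Fin (d (k + 1))))
    (c : (k : ℕ) → EuclideanSpace ℝ (Fin (d k)))
    (β : ℕ → ℝ) (hβ : ∀ k, 1 ≤ k → k ≤ L → 0 ≤ β k)
    (C : (k : ℕ) → Set (EuclideanSpace ℝ (Fin (d k))))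
    (hCcv : ∀ k, 1 ≤ k → k ≤ L → Convex ℝ (C k))
    (E : ((k : ℕ) → EuclideanSpace ℝ (Fin (d k))) → ℝ)
    (hE : ∀ z, E z = (1/2) * ∑ k ∈ Finset.range L,
        (‖z (k + 1) - Matrix.toEuclideanLin (W k) (z k) - b k‖ ^ 2
          + β (k + 1) * ‖Matrix.toEuclideanLin (W k)ᵀ (z (k + 1)) - z k - c k‖ ^ 2))
    (x x' : EuclideanSpace ℝ (Fin (d 0)))
    (zs zs' : (k : ℕ) → EuclideanSpace ℝ (Fin (d k)))
    (hzs : zs 0 = x ∧ (∀ k, 1 ≤ k → k ≤ L → zs k ∈ C k) ∧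
      ∀ z, z 0 = x → (∀ k, 1 ≤ k → k ≤ L → z k ∈ C k) → E zs ≤ E z)
    (hzs' : zs' 0 = x' ∧ (∀ k, 1 ≤ k → k ≤ L → zs' k ∈ C k) ∧
      ∀ z, z 0 = x' → (∀ k, 1 ≤ k → k ≤ L → z k ∈ C k) → E zs' ≤ E z) :
    ‖zs L - zs' L‖ ≤
      (∏ k ∈ Finset.Icc 1 L,
        (if 0 < β k then (Real.sqrt (β k) + 1 / Real.sqrt (β k)) / 2
         else ‖LinearMap.toContinuousLinearMap (E := EuclideanSpace ℝ (Fin (d (k - 1)))) (Matrix.toEuclideanLin (W (k - 1)))‖))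
        * ‖x - x'‖ := by
  obtain rfl : E = LiftedNetwork.energy W b c β L := funext hE
  obtain ⟨rfl, hzsC, hmin⟩ := hzs
  obtain ⟨rfl, hzsC', hmin'⟩ := hzs'
  refine le_prod_Icc_mul_of_succ_le_mul (a := fun k => ‖zs k - zs' k‖)
    (fun i _ => layerConstant_nonneg _ _) fun i hi => ?_
  exact LiftedNetwork.norm_sub_succ_le_layerConstant_mul W b c β L hβ hCcv ⟨rfl, hzsC⟩
    (isMinOn_iff.mpr fun z hz => hmin z hz.1 hz.2) ⟨rfl, hzsC'⟩
    (isMinOn_iff.mpr fun z hz => hmin' z hz.1 hz.2) hi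

/-- (Theorem 1 of the paper.) In an `L`-layer lifted
regression/reconstruction network with energy
`E(z; x) = (1/2) ∑_{k=0}^{L-1} (‖z_{k+1} − W_k z_k − b_k‖² + β_{k+1} ‖W_kᵀ z_{k+1} − z_k − c_k‖²)`
(with `z₀ := x`, `z_k ∈ C_k`), and
`ρ_k = (√β_k + 1/√β_k)/2` if `β_k > 0`, `ρ_k = ‖W_{k-1}‖₂` if `β_k = 0`,
the map from the input `x` to the minimizing last-layer activations `z*_L` is
Lipschitz with constant `∏_{k=1}^{L} ρ_k`. -/
theorem stmt8 (L : ℕ) (hL : 0 < L)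
    (d : ℕ → ℕ) (hd : ∀ k, k ≤ L → 0 < d k)
    (W : (k : ℕ) → Matrix (Fin (d (k + 1))) (Fin (d k)) ℝ)
    (b : (k : ℕ) → EuclideanSpace ℝ (Fin (d (k + 1))))
    (c : (k : ℕ) → EuclideanSpace ℝ (Fin (d k)))
    (β : ℕ → ℝ) (hβ : ∀ k, 1 ≤ k → k ≤ L → 0 ≤ β k)
    (C : (k : ℕ) → Set (EuclideanSpace ℝ (Fin (d k))))
    (hCne : ∀ k, 1 ≤ k → k ≤ L → (C k).Nonempty)
    (hCcl : ∀ k, 1 ≤ k → k ≤ L → IsClosed (C k))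
    (hCcv : ∀ k, 1 ≤ k → k ≤ L → Convex ℝ (C k))
    (E : ((k : ℕ) → EuclideanSpace ℝ (Fin (d k))) → ℝ)
    (hE : ∀ z, E z = (1/2) * ∑ k ∈ Finset.range L,
        (‖z (k + 1) - Matrix.toEuclideanLin (W k) (z k) - b k‖ ^ 2
          + β (k + 1) * ‖Matrix.toEuclideanLin (W k)ᵀ (z (k + 1)) - z k - c k‖ ^ 2))
    (x x' : EuclideanSpace ℝ (Fin (d 0)))
    (zs zs' : (k : ℕ) → EuclideanSpace ℝ (Fin (d k)))
    (hzs : zs 0 = x ∧ (∀ k, 1 ≤ k → k ≤ L → zs k ∈ C k) ∧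
      ∀ z, z 0 = x → (∀ k, 1 ≤ k → k ≤ L → z k ∈ C k) → E zs ≤ E z)
    (hzs' : zs' 0 = x' ∧ (∀ k, 1 ≤ k → k ≤ L → zs' k ∈ C k) ∧
      ∀ z, z 0 = x' → (∀ k, 1 ≤ k → k ≤ L → z k ∈ C k) → E zs' ≤ E z) :
    ‖zs L - zs' L‖ ≤
      (∏ k ∈ Finset.Icc 1 L,
        (if 0 < β k then (Real.sqrt (β k) + 1 / Real.sqrt (β k)) / 2
         else ‖LinearMap.toContinuousLinearMap (E := EuclideanSpace ℝ (Fin (d (k - 1)))) (Matrix.toEuclideanLin (W (k - 1)))‖))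
        * ‖x - x'‖ :=
  stmt8_general L d W b c β hβ C hCcv E hE x x' zs zs' hzs hzs'
end

section
/- Let f : ℝ^m → ℝ^C be Lipschitz continuous with constant ρ > 0 (Euclidean norms on domain and codomain), let x ∈ ℝ^m, and let j be an index such that the classification margin m_x = f_j(x) − max_{j' ≠ j} f_{j'}(x) is positive. Then for every perturbation δ ∈ ℝ^m with ‖δ‖ < m_x/(√2·ρ), the predicted class is unchanged: f_j(x + δ) > f_{j'}(x + δ) for all j' ≠ j. -/
/-! Two coordinates of a vector in `ℓ²` together contribute at most `√2` times its norm, so a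
`ρ`-Lipschitz `f` moves the gap `f_j − f_{j'}` by at most `√2 ρ ‖δ‖`; this is less than the
margin, which bounds the gap at `x` from below. -/

theorem EuclideanSpace.abs_add_abs_le_sqrt_two_mul_norm {ι : Type*} [Fintype ι]
    (v : EuclideanSpace ℝ ι) {i k : ι} (hik : i ≠ k) : |v i| + |v k| ≤ √2 * ‖v‖ := by
  have hpair : v i ^ 2 + v k ^ 2 ≤ ‖v‖ ^ 2 := by
    classical
    rw [EuclideanSpace.real_norm_sq_eq, ← Finset.sum_pair (f := fun l => v l ^ 2) hik]
    exact Finset.sum_le_sum_of_subset_of_nonneg (Finset.subset_univ _) fun _ _ _ => sq_nonneg _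
  refine le_of_sq_le_sq ?_ (by positivity)
  calc (|v i| + |v k|) ^ 2 ≤ 2 * (|v i| ^ 2 + |v k| ^ 2) := add_sq_le
    _ ≤ 2 * ‖v‖ ^ 2 := by rw [sq_abs, sq_abs]; gcongr
    _ = (√2 * ‖v‖) ^ 2 := by rw [mul_pow, Real.sq_sqrt zero_le_two]

theorem EuclideanSpace.apply_lt_apply_of_sqrt_two_mul_norm_sub_lt {ι : Type*} [Fintype ι]
    {u w : EuclideanSpace ℝ ι} {i k : ι} (hik : i ≠ k) (h : √2 * ‖u - w‖ < w i - w k) :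
    u k < u i := by
  have := (u - w).abs_add_abs_le_sqrt_two_mul_norm hik
  simp only [PiLp.sub_apply] at this
  linarith [neg_abs_le (u i - w i), le_abs_self (u k - w k)]

theorem stmt10_general {m C : ℕ} (ρ : ℝ) (hρ : 0 < ρ)
    (f : EuclideanSpace ℝ (Fin m) → EuclideanSpace ℝ (Fin C))
    (hf : ∀ x y, ‖f x - f y‖ ≤ ρ * ‖x - y‖)
    (x : EuclideanSpace ℝ (Fin m)) (j : Fin C)
    (mx : ℝ) (hmx : mx = f x j - ⨆ j' : {j' : Fin C // j' ≠ j}, f x (j' : Fin C)) :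
    ∀ δ : EuclideanSpace ℝ (Fin m), ‖δ‖ < mx / (Real.sqrt 2 * ρ) →
      ∀ j' : Fin C, j' ≠ j → f (x + δ) j' < f (x + δ) j := by
  intro δ hδ j' hj'
  have hgap : mx ≤ f x j - f x j' := by
    rw [hmx]
    gcongr
    exact le_ciSup (f := fun k : {k : Fin C // k ≠ j} => f x k) (Finite.bddAbove_range _) ⟨j', hj'⟩
  have hsmall : √2 * (ρ * ‖δ‖) < mx := by
    rw [← mul_assoc, mul_comm]
    exact (lt_div_iff₀ (by positivity)).mp hδ
  refine EuclideanSpace.apply_lt_apply_of_sqrt_two_mul_norm_sub_lt (w := f x) hj'.symm ?_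
  calc √2 * ‖f (x + δ) - f x‖ ≤ √2 * (ρ * ‖δ‖) := by
        gcongr
        simpa using hf (x + δ) x
    _ < f x j - f x j' := hsmall.trans_le hgap

/-- (Safe-perturbation radius from the classification margin.)
If `f : ℝᵐ → ℝ^C` is `ρ`-Lipschitz, the label `j` strictly maximizes `f x`, and the
margin `m_x = f x j − max_{j' ≠ j} f x j'` is positive, then every perturbation `δ`
with `‖δ‖ < m_x/(√2 ρ)` leaves the predicted class unchanged. -/
theorem stmt10 {m C : ℕ} (hC : 2 ≤ C) (ρ : ℝ) (hρ : 0 < ρ)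
    (f : EuclideanSpace ℝ (Fin m) → EuclideanSpace ℝ (Fin C))
    (hf : ∀ x y, ‖f x - f y‖ ≤ ρ * ‖x - y‖)
    (x : EuclideanSpace ℝ (Fin m)) (j : Fin C)
    (hjmax : ∀ j' : Fin C, j' ≠ j → f x j' < f x j)
    (mx : ℝ) (hmx : mx = f x j - ⨆ j' : {j' : Fin C // j' ≠ j}, f x (j' : Fin C))
    (hmxpos : 0 < mx) :
    ∀ δ : EuclideanSpace ℝ (Fin m), ‖δ‖ < mx / (Real.sqrt 2 * ρ) →
      ∀ j' : Fin C, j' ≠ j → f (x + δ) j' < f (x + δ) j :=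
  stmt10_general ρ hρ f hf x j mx hmx
end

section
/- Let W be a real n×m matrix and let G : ℝ^n → ℝ be a continuous convex function that is coercive, i.e., G(z) → ∞ as ‖z‖ → ∞. Then the free-energy function E(x) = inf_{z ∈ ℝ^n} [ (1/2)‖z − Wx‖² + (1/2)‖Wᵀz − x‖² + G(z) ] is coercive: E(x) → ∞ as ‖x‖ → ∞. -/
/-!
Every competitor `z` pays `G z` and at least `(1/2)‖Wᵀz − x‖²`. The map
`(x, z) ↦ (z, Wᵀz − x)` tends to infinity as `‖x‖ → ∞`, uniformly in `z`, since `x` is recovered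
from its image by a bounded linear map; and
`(z, y) ↦ G z + (1/2)‖y‖²` is coercive on the product, because each summand is coercive in its own
variable and bounded below (`G` by the extreme value theorem). Hence the integrand tends to `∞` as
`‖x‖ → ∞` uniformly in `z`, and so does its infimum.
-/

open Filter Bornology Set Matrix

theorem tendsto_iInf_atTop_of_tendsto_prod_top {α β γ : Type*} [Nonempty β]
    [ConditionallyCompleteLattice γ] {l : Filter α} {Φ : α → β → γ}
    (h : Tendsto (Function.uncurry Φ) (l ×ˢ ⊤) atTop) :
    Tendsto (fun x => ⨅ z, Φ x z) l atTop := by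
  refine tendsto_atTop.2 fun M => ?_
  have hM : ∀ᶠ p in l ×ˢ ⊤, M ≤ Function.uncurry Φ p := h.eventually_ge_atTop M
  rw [prod_top, eventually_comap] at hM
  filter_upwards [hM] with x hx
  exact le_ciInf fun z => hx (x, z) rfl

theorem tendsto_add_cobounded_prod {E F : Type*} [Bornology E] [Bornology F]
    {f : E → ℝ} {g : F → ℝ} (hf : Tendsto f (cobounded E) atTop)
    (hg : Tendsto g (cobounded F) atTop) (hfb : BddBelow (range f)) (hgb : BddBelow (range g)) :
    Tendsto (fun p : E × F => f p.1 + g p.2) (cobounded (E × F)) atTop := by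
  obtain ⟨a, ha⟩ := hfb
  obtain ⟨b, hb⟩ := hgb
  rw [cobounded_prod, Filter.coprod, tendsto_sup]
  exact ⟨tendsto_atTop_add_right_of_le _ b (hf.comp tendsto_comap) fun p => hb ⟨p.2, rfl⟩,
    tendsto_atTop_add_left_of_le _ a (fun p => ha ⟨p.1, rfl⟩) (hg.comp tendsto_comap)⟩

theorem ContinuousLinearMap.tendsto_residual_cobounded {𝕜 E F : Type*}
    [NontriviallyNormedField 𝕜] [SeminormedAddCommGroup E] [SeminormedAddCommGroup F]
    [NormedSpace 𝕜 E] [NormedSpace 𝕜 F] (L : E →L[𝕜] F) :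
    Tendsto (fun p : F × E => (p.2, L p.2 - p.1)) (cobounded F ×ˢ ⊤) (cobounded (E × F)) := by
  rw [← tendsto_norm_atTop_iff_cobounded]
  have hK : 0 < ‖L‖ + 1 := by positivity
  have hx : Tendsto (fun p : F × E => (‖L‖ + 1)⁻¹ * ‖p.1‖) (cobounded F ×ˢ ⊤) atTop :=
    (tendsto_norm_cobounded_atTop.comp tendsto_fst).const_mul_atTop (inv_pos.2 hK)
  refine tendsto_atTop_mono (fun p => ?_) hx
  rw [inv_mul_le_iff₀ hK]
  have h₁ := _root_.norm_fst_le (p.2, L p.2 - p.1)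
  have h₂ := _root_.norm_snd_le (p.2, L p.2 - p.1)
  calc ‖p.1‖ ≤ ‖L p.2‖ + ‖L p.2 - p.1‖ := norm_le_norm_add_norm_sub _ _
    _ ≤ ‖L‖ * ‖p.2‖ + ‖L p.2 - p.1‖ := by gcongr; exact L.le_opNorm _
    _ ≤ (‖L‖ + 1) * ‖(p.2, L p.2 - p.1)‖ := by nlinarith [norm_nonneg L]

theorem stmt12_general {n m : ℕ}
    (W : Matrix (Fin n) (Fin m) ℝ)
    (G : EuclideanSpace ℝ (Fin n) → ℝ)
    (hGcont : Continuous G)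
    (hGcoer : Filter.Tendsto G (Filter.comap norm Filter.atTop) Filter.atTop) :
    Filter.Tendsto
      (fun x : EuclideanSpace ℝ (Fin m) =>
        sInf (Set.range (fun z : EuclideanSpace ℝ (Fin n) =>
          (1/2) * ‖z - Matrix.toEuclideanLin W x‖ ^ 2
            + (1/2) * ‖Matrix.toEuclideanLin Wᵀ z - x‖ ^ 2 + G z)))
      (Filter.comap norm Filter.atTop) Filter.atTop := by
  rw [comap_norm_atTop] at hGcoer ⊢
  obtain ⟨z₀, hz₀⟩ := hGcont.exists_forall_le <|
    Metric.cobounded_eq_cocompact (α := EuclideanSpace ℝ (Fin n)) ▸ hGcoer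
  have hsq : Tendsto (fun y : EuclideanSpace ℝ (Fin m) => (1/2) * ‖y‖ ^ 2)
      (cobounded _) atTop :=
    ((tendsto_pow_atTop two_ne_zero).comp tendsto_norm_cobounded_atTop).const_mul_atTop
      one_half_pos
  have hcoer := tendsto_add_cobounded_prod hGcoer hsq ⟨G z₀, by rintro _ ⟨z, rfl⟩; exact hz₀ z⟩
    ⟨0, by rintro _ ⟨y, rfl⟩; positivity⟩
  let L := LinearMap.toContinuousLinearMap (Matrix.toEuclideanLin Wᵀ)
  refine tendsto_iInf_atTop_of_tendsto_prod_top <|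
    tendsto_atTop_mono (fun p => ?_) (hcoer.comp L.tendsto_residual_cobounded)
  have hfit : 0 ≤ (1/2) * ‖p.2 - Matrix.toEuclideanLin W p.1‖ ^ 2 := by positivity
  simp only [Function.comp_apply]
  change _ ≤ _ + (1/2) * ‖L p.2 - p.1‖ ^ 2 + _
  linarith

/-- If `G` is continuous, convex and coercive
(`G z → ∞` as `‖z‖ → ∞`), then the free-energy function
`E(x) = inf_z [(1/2)‖z − Wx‖² + (1/2)‖Wᵀz − x‖² + G(z)]` is coercive:
`E x → ∞` as `‖x‖ → ∞`. -/
theorem stmt12 {n m : ℕ}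
    (W : Matrix (Fin n) (Fin m) ℝ)
    (G : EuclideanSpace ℝ (Fin n) → ℝ)
    (hGcont : Continuous G) (hGconv : ConvexOn ℝ Set.univ G)
    (hGcoer : Filter.Tendsto G (Filter.comap norm Filter.atTop) Filter.atTop) :
    Filter.Tendsto
      (fun x : EuclideanSpace ℝ (Fin m) =>
        sInf (Set.range (fun z : EuclideanSpace ℝ (Fin n) =>
          (1/2) * ‖z - Matrix.toEuclideanLin W x‖ ^ 2
            + (1/2) * ‖Matrix.toEuclideanLin Wᵀ z - x‖ ^ 2 + G z)))
      (Filter.comap norm Filter.atTop) Filter.atTop :=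
  stmt12_general W G hGcont hGcoer
end

section
/- Let β > 0 and let W be a real n×m matrix. Let λ₁, …, λ_n ≥ 0 denote the eigenvalues of the symmetric positive semidefinite matrix W·Wᵀ (so that σ_i = √λ_i are the singular values of W). Then the ℓ2 operator norm of A_β = (1+β)·(I + β·W·Wᵀ)⁻¹·W equals max_i (1+β)·√λ_i / (1 + β·λ_i). -/
/-!
With `S = W Wᵀ`, the matrix `(I + β S)⁻¹` is `r(S)` for `r t = (1 + β t)⁻¹` in the functional
calculus of the positive semidefinite matrix `S`. Hence
`A_β A_βᵀ = (1 + β)² r(S) S r(S) = f(S)²` with `f t = (1 + β) √t / (1 + β t)`,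
so `‖A_β‖ = ‖f(S)‖` by the C⋆-identity, and `f(S)` is unitarily equivalent to the
diagonal matrix of the values `f(λ_i)`.
-/

open Matrix Polynomial
open scoped Matrix.Norms.L2Operator

lemma pi_norm_comp_eq_of_map_eq {ι α E : Type*} [Fintype ι] [SeminormedAddCommGroup E]
    {a b : ι → α} (h : Finset.univ.val.map a = Finset.univ.val.map b) (g : α → E) :
    ‖g ∘ a‖ = ‖g ∘ b‖ := by
  have hmap (c : ι → α) : Finset.univ.val.map (fun i => ‖g (c i)‖₊) =
      (Finset.univ.val.map c).map (‖g ·‖₊) := (Multiset.map_map (‖g ·‖₊) c _).symm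
  simp only [Pi.norm_def, Finset.sup_def, Function.comp_apply, hmap, h]

lemma pi_norm_eq_sup'_of_nonneg {ι : Type*} [Fintype ι] (hι : (Finset.univ : Finset ι).Nonempty)
    {v : ι → ℝ} (hv : 0 ≤ v) : ‖v‖ = Finset.univ.sup' hι v := by
  refine le_antisymm ((pi_norm_le_iff_of_nonneg ?_).2 fun i => ?_) ?_
  · obtain ⟨i, -, hi⟩ := Finset.exists_mem_eq_sup' hι v
    exact hi ▸ hv i
  · rw [Real.norm_of_nonneg (hv i)]
    exact Finset.le_sup' v (Finset.mem_univ i)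
  · exact Finset.sup'_le _ _ fun i _ => (le_abs_self _).trans (norm_le_pi_norm v i)

namespace Matrix

section Norm

variable {𝕜 : Type*} [RCLike 𝕜] {m n k : Type*} [Fintype m] [Fintype n] [Fintype k]

lemma l2_opNorm_eq_of_mul_conjTranspose_eq [DecidableEq m] [DecidableEq n]
    {A : Matrix m n 𝕜} {P : Matrix k m 𝕜} (h : A * Aᴴ = Pᴴ * P) : ‖A‖ = ‖P‖ := by
  have := l2_opNorm_conjTranspose_mul_self Aᴴ
  rw [conjTranspose_conjTranspose, l2_opNorm_conjTranspose, h,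
    l2_opNorm_conjTranspose_mul_self] at this
  exact (mul_self_inj (norm_nonneg _) (norm_nonneg _)).mp this.symm

lemma IsHermitian.l2_opNorm_cfc [DecidableEq n] {A : Matrix n n 𝕜} (hA : A.IsHermitian)
    (f : ℝ → ℝ) : ‖cfc f A‖ = ‖f ∘ hA.eigenvalues‖ := by
  rw [hA.cfc_eq, IsHermitian.cfc, Unitary.conjStarAlgAut_apply, ← Unitary.coe_star,
    CStarRing.norm_mul_coe_unitary, CStarRing.norm_coe_unitary_mul, l2_opNorm_diagonal]
  simp [Pi.norm_def]

end Norm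

variable {n m : Type*} [Fintype n] [DecidableEq n]

lemma IsHermitian.map_eigenvalues_eq_of_charpoly_eq {A : Matrix n n ℝ} (hA : A.IsHermitian)
    {lam : n → ℝ} (hlam : A.charpoly = ∏ i, (X - C (lam i))) :
    Finset.univ.val.map lam = Finset.univ.val.map hA.eigenvalues := by
  have := hA.roots_charpoly_eq_eigenvalues
  rw [hlam, Polynomial.roots_prod _ _ (by simp [Finset.prod_ne_zero_iff, X_sub_C_ne_zero])] at this
  simpa using this

lemma continuousOn_spectrum (S : Matrix n n ℝ) (f : ℝ → ℝ) : ContinuousOn f (spectrum ℝ S) :=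
  S.finite_real_spectrum.continuousOn f

lemma PosSemidef.nonneg_of_mem_spectrum {S : Matrix n n ℝ} (hS : S.PosSemidef) {t : ℝ}
    (ht : t ∈ spectrum ℝ S) : 0 ≤ t := by
  obtain ⟨i, rfl⟩ := hS.isHermitian.spectrum_real_eq_range_eigenvalues ▸ ht
  exact hS.eigenvalues_nonneg i

lemma PosSemidef.inv_one_add_smul_eq_cfc {S : Matrix n n ℝ} (hS : S.PosSemidef) {β : ℝ}
    (hβ : 0 ≤ β) : (1 + β • S)⁻¹ = cfc (fun t => (1 + β * t)⁻¹) S := by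
  have hS' : IsSelfAdjoint S := hS.isHermitian
  rw [nonsing_inv_eq_ringInverse, cfc_inv (fun t => 1 + β * t) S]
  · rw [cfc_const_add 1 (fun t => β * t) S, cfc_const_mul_id β S, Algebra.algebraMap_eq_smul_one,
      one_smul]
  · intro t ht
    have := hS.nonneg_of_mem_spectrum ht
    positivity

lemma PosSemidef.cfc_mul_self_eq {S : Matrix n n ℝ} (hS : S.PosSemidef) {β : ℝ} (hβ : 0 ≤ β) :
    cfc (fun t => (1 + β) * √t / (1 + β * t)) S * cfc (fun t => (1 + β) * √t / (1 + β * t)) S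
      = (1 + β) ^ 2 • (cfc (fun t => (1 + β * t)⁻¹) S * S * cfc (fun t => (1 + β * t)⁻¹) S) := by
  have hS' : IsSelfAdjoint S := hS.isHermitian
  have hc := S.continuousOn_spectrum
  set r : ℝ → ℝ := fun t => (1 + β * t)⁻¹
  calc _ = cfc (fun t => (1 + β) ^ 2 * (r t * t * r t)) S := by
        rw [← cfc_mul _ _ S (hc _) (hc _)]
        refine cfc_congr fun t ht => ?_
        have ht0 := hS.nonneg_of_mem_spectrum ht
        have : 1 + β * t ≠ 0 := by positivity
        simp only [r]
        field_simp
        rw [Real.sq_sqrt ht0]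
    _ = _ := by
        rw [cfc_const_mul _ _ S (hc _), cfc_mul (fun t => r t * t) r S (hc _) (hc _),
          cfc_mul r (fun t => t) S (hc _) (hc _), cfc_id' ℝ S]

lemma inv_one_add_smul_mul_transpose_mul_conjTranspose [Fintype m] (W : Matrix n m ℝ) {β : ℝ}
    (hβ : 0 ≤ β) :
    let A := (1 + β) • ((1 + β • (W * Wᵀ))⁻¹ * W)
    let P := cfc (fun t => (1 + β) * √t / (1 + β * t)) (W * Wᵀ)
    A * Aᴴ = Pᴴ * P := by
  intro A P
  have hS : (W * Wᵀ).PosSemidef := by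
    simpa [conjTranspose_eq_transpose_of_trivial] using posSemidef_self_mul_conjTranspose W
  have hP : Pᵀ = P := (cfc_predicate _ _ : IsSelfAdjoint P)
  have hR : (cfc (fun t => (1 + β * t)⁻¹) (W * Wᵀ))ᵀ = cfc (fun t => (1 + β * t)⁻¹) (W * Wᵀ) :=
    (cfc_predicate _ _ : IsSelfAdjoint _)
  simp only [A, P, conjTranspose_eq_transpose_of_trivial, hP, hS.cfc_mul_self_eq hβ,
    hS.inv_one_add_smul_eq_cfc hβ, transpose_smul, transpose_mul, hR, Matrix.smul_mul,
    Matrix.mul_smul, smul_smul, Matrix.mul_assoc, sq]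

end Matrix

/-- (Remark 1 of the paper.) Let `β > 0` and let
`λ₁, …, λ_n ≥ 0` be the eigenvalues (with multiplicity) of the positive
semidefinite matrix `W Wᵀ`, encoded by the factorization of its characteristic
polynomial. Then the Euclidean operator norm of `A_β = (1+β)(I + β W Wᵀ)⁻¹ W`
equals `max_i (1+β)√λ_i/(1 + β λ_i)`. -/
theorem stmt14 {n m : ℕ} (hn : 0 < n) (β : ℝ) (hβ : 0 < β)
    (W : Matrix (Fin n) (Fin m) ℝ)
    (lam : Fin n → ℝ) (hlam0 : ∀ i, 0 ≤ lam i)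
    (hlam : (W * Wᵀ).charpoly = ∏ i : Fin n, (X - Polynomial.C (lam i))) :
    ‖LinearMap.toContinuousLinearMap
        (Matrix.toEuclideanLin ((1 + β) • (((1 : Matrix (Fin n) (Fin n) ℝ) + β • (W * Wᵀ))⁻¹ * W)))‖
      = Finset.univ.sup' ⟨⟨0, hn⟩, Finset.mem_univ _⟩
          (fun i : Fin n => (1 + β) * Real.sqrt (lam i) / (1 + β * lam i)) := by
  have hS : (W * Wᵀ).IsHermitian := by
    simpa [conjTranspose_eq_transpose_of_trivial] using isHermitian_mul_conjTranspose_self W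
  let f : ℝ → ℝ := fun t => (1 + β) * √t / (1 + β * t)
  have hf : 0 ≤ f ∘ lam := fun i => by
    have := hlam0 i
    simp only [f, Function.comp_apply, Pi.zero_apply]
    positivity
  calc _ = ‖cfc f (W * Wᵀ)‖ := l2_opNorm_eq_of_mul_conjTranspose_eq
        (inv_one_add_smul_mul_transpose_mul_conjTranspose W hβ.le)
    _ = ‖f ∘ lam‖ := by
        rw [hS.l2_opNorm_cfc, pi_norm_comp_eq_of_map_eq (hS.map_eigenvalues_eq_of_charpoly_eq hlam)]
    _ = _ := pi_norm_eq_sup'_of_nonneg _ hf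
end
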